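/- Deterministic score-function robustness (core of Theorem 1): let E be a real normed vector space, K ≥ 2 a natural number, ε̂, δ̂ ≥ 0, and g : E → Fin K → ℝ a family of score functions with 0 ≤ g i x ≤ 1 for all i and x, satisfying the DP-type stability property: for all x, x' with ‖x - x'‖ ≤ 1 and all i : Fin K, g i x ≤ exp ε̂ * g i x' + δ̂. If for some x and some c : Fin K, g c x > exp(2*ε̂) * (max over i ≠ c of g i x) + (1 + exp ε̂) * δ̂, then for every α with ‖α‖ ≤ 1 and every i ≠ c, g c (x + α) > g i (x + α). -/

import Mathlib

/-!
Apply the stability property twice along the segment from `x` to `x + α`: it bounds the score of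
a rival label `i` at `x + α` from above by `exp ε̂ * g i x + δ̂`, and the score of `c` at `x + α`
from below by `(g c x - δ̂) / exp ε̂`. The margin `exp (2 ε̂) * max + (1 + exp ε̂) δ̂` is exactly what
separates these two bounds.
-/

open Real

lemma lt_of_stable_of_margin {e δ a a' b b' : ℝ} (he : 0 < e) (hb' : b' ≤ e * b + δ)
    (ha : a ≤ e * a' + δ) (hgap : e * e * b + (1 + e) * δ < a) : b' < a' := by
  have h : e * b' < e * a' := by nlinarith
  exact lt_of_mul_lt_mul_left h he.le

def ScoreStable {ι E : Type*} [SeminormedAddCommGroup E] (g : ι → E → ℝ) (ε δ : ℝ) : Prop :=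
  ∀ x x' : E, ‖x - x'‖ ≤ 1 → ∀ i, g i x ≤ exp ε * g i x' + δ

lemma ScoreStable.lt_add_of_margin {ι E : Type*} [SeminormedAddCommGroup E] {g : ι → E → ℝ}
    {ε δ : ℝ} (hg : ScoreStable g ε δ) {x α : E} (hα : ‖α‖ ≤ 1) {i c : ι}
    (hgap : exp (2 * ε) * g i x + (1 + exp ε) * δ < g c x) : g i (x + α) < g c (x + α) := by
  refine lt_of_stable_of_margin (exp_pos ε) ?_ ?_ (by rwa [← exp_add, ← two_mul])
  · simpa using hg (x + α) x (by simpa using hα) i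
  · simpa using hg x (x + α) (by simpa [norm_sub_rev] using hα) c

/-- Deterministic score-function robustness (core of Theorem 1): a family of
`[0, 1]`-valued score functions with the DP-type stability property predicts
the same label on all points within distance `1` of `x`, provided the score of
the label `c` at `x` dominates the others by the stated margin. -/
theorem score_function_robustness
    {E : Type*} [NormedAddCommGroup E]
    (K : ℕ) (hK : 2 ≤ K) (εh δh : ℝ)
    (g : Fin K → E → ℝ)
    (hstab : ∀ x x' : E, ‖x - x'‖ ≤ 1 → ∀ i : Fin K,
      g i x ≤ Real.exp εh * g i x' + δh)
    (x : E) (c : Fin K)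
    (hgap : g c x >
      Real.exp (2 * εh) *
        ((Finset.univ.erase c).sup'
          (by
            obtain ⟨i, hi⟩ :=
              Fintype.exists_ne_of_one_lt_card (by simpa using (show 1 < K by omega)) c
            exact ⟨i, Finset.mem_erase.mpr ⟨hi, Finset.mem_univ i⟩⟩)
          fun i => g i x)
        + (1 + Real.exp εh) * δh) :
    ∀ α : E, ‖α‖ ≤ 1 → ∀ i : Fin K, i ≠ c → g c (x + α) > g i (x + α) := by
  intro α hα i hic
  have hi_le_max : g i x ≤ (Finset.univ.erase c).sup' _ fun j => g j x :=
    Finset.le_sup' (fun j => g j x) (Finset.mem_erase.mpr ⟨hic, Finset.mem_univ i⟩)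
  refine ScoreStable.lt_add_of_margin hstab hα (lt_of_le_of_lt ?_ hgap)
  gcongr
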